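/- Let Q_{0,x} be the quenched polymer measure assigning each up-right path from 0 to x probability proportional to the product of its weights. For any k, l, m ∈ ℤ_{≥0} and x ∈ ℤ²_{≥0} with x + l·e_1 - m·e_2 ∈ ℤ²_{≥0}, the quenched probability Q_{0,x}{τ ≥ k} ≤ Q_{0, x + l e_1 - m e_2}{τ ≥ k}. That is, shifting the endpoint right or down increases the probability that the polymer takes at least k initial e_1 steps. -/

import Mathlib

/-!
Write `r(a, q) = Q_{0,(a,q)}{τ ≥ k}`. At `v = (a, q)` with `a, q ≥ 1` and `a + q > k`, the
restricted and the full partition function obey the same last-step recursion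
`Z(v) = Y(v) (Z(v - e₁) + Z(v - e₂))`, so `r(v)` is a mediant of `r(v - e₁)` and `r(v - e₂)`.
Elsewhere `r` is explicit: it is `1` on the `e₁`-axis and, for `k > 0`, `0` on the `e₂`-axis and at
the points off the `e₁`-axis with `a + q ≤ k`. Induction along anti-diagonals then gives
`r(v - e₁) ≤ r(v) ≤ r(v - e₂)`: at each step `r(v - e₁) ≤ r(v - e₁ - e₂) ≤ r(v - e₂)`, and a
mediant lies between its two fractions.
-/

/-- The `j`-th vertex of the up-right path started at `u` whose `i`-th step is
`e₁` if `σ i = true` and `e₂` if `σ i = false`. -/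
def pathVertex (u : ℤ × ℤ) (σ : ℕ → Bool) (j : ℕ) : ℤ × ℤ :=
  (u.1 + ((Finset.range j).filter fun i => σ i = true).card,
   u.2 + ((Finset.range j).filter fun i => σ i = false).card)

/-- The polymer partition function `Z_{u,v}` over up-right paths from `u` to `v`. -/
noncomputable def Zfun (Y : ℤ × ℤ → ℝ) (u v : ℤ × ℤ) : ℝ :=
  if u.1 ≤ v.1 ∧ u.2 ≤ v.2 then
    ∑ σ : Fin ((v.1 - u.1).toNat + (v.2 - u.2).toNat) → Bool,
      (if (Finset.univ.filter fun i => σ i = true).card = (v.1 - u.1).toNat then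
        ∏ j ∈ Finset.range ((v.1 - u.1).toNat + (v.2 - u.2).toNat + 1),
          Y (pathVertex u
              (fun i => if h : i < (v.1 - u.1).toNat + (v.2 - u.2).toNat then σ ⟨i, h⟩
                        else false) j)
      else 0)
  else 0

/-- The restricted partition function `Z_{0,z}(τ ≥ k)`: the sum over up-right paths
from `0` to `z` whose first `k` steps are all `e₁` steps. -/
noncomputable def ZExit (Y : ℤ × ℤ → ℝ) (z : ℤ × ℤ) (k : ℕ) : ℝ :=
  if 0 ≤ z.1 ∧ 0 ≤ z.2 then
    ∑ σ : Fin (z.1.toNat + z.2.toNat) → Bool,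
      (if (Finset.univ.filter fun i => σ i = true).card = z.1.toNat ∧
          (∀ i : Fin (z.1.toNat + z.2.toNat), (i : ℕ) < k → σ i = true) then
        ∏ j ∈ Finset.range (z.1.toNat + z.2.toNat + 1),
          Y (pathVertex 0
              (fun i => if h : i < z.1.toNat + z.2.toNat then σ ⟨i, h⟩ else false) j)
      else 0)
  else 0

/-- `Q_{0,x}{τ ≥ k}`, the quenched probability that the polymer from `0` to `x`
takes at least `k` initial `e₁` steps. -/
noncomputable def QExit (Y : ℤ × ℤ → ℝ) (x : ℤ × ℤ) (k : ℕ) : ℝ :=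
  ZExit Y x k / Zfun Y 0 x

open Finset

section Mediant

variable {α : Type*} [Field α] [LinearOrder α] [IsStrictOrderedRing α] {a b c d : α}

theorem div_le_add_div_add (hb : 0 < b) (hd : 0 < d) (h : a / b ≤ c / d) :
    a / b ≤ (a + c) / (b + d) := by
  rw [div_le_div_iff₀ hb hd] at h
  rw [div_le_div_iff₀ hb (add_pos hb hd)]
  linarith

theorem add_div_add_le_div (hb : 0 < b) (hd : 0 < d) (h : a / b ≤ c / d) :
    (a + c) / (b + d) ≤ c / d := by
  rw [div_le_div_iff₀ hb hd] at h
  rw [div_le_div_iff₀ (add_pos hb hd) hd]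
  linarith

end Mediant

theorem monotone_antitone_of_between {α : Type*} [Preorder α] (r : ℕ → ℕ → α)
    (hrow : ∀ a, r a 0 ≤ r (a + 1) 0) (hcol : ∀ q, r 0 (q + 1) ≤ r 0 q)
    (hbetween : ∀ a q, r a (q + 1) ≤ r (a + 1) q →
      r a (q + 1) ≤ r (a + 1) (q + 1) ∧ r (a + 1) (q + 1) ≤ r (a + 1) q) :
    (∀ q, Monotone fun a => r a q) ∧ ∀ a, Antitone (r a) := by
  have key : ∀ n a q, a + q = n → r a q ≤ r (a + 1) q ∧ r a (q + 1) ≤ r a q := by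
    intro n
    induction n with
    | zero =>
      rintro a q h
      obtain ⟨rfl, rfl⟩ : a = 0 ∧ q = 0 := by omega
      exact ⟨hrow 0, hcol 0⟩
    | succ n ih =>
      rintro a q h
      constructor
      · cases q with
        | zero => exact hrow a
        | succ q =>
          obtain ⟨hmono, hanti⟩ := ih a q (by omega)
          exact (hbetween a q (hanti.trans hmono)).1
      · cases a with
        | zero => exact hcol q
        | succ a =>
          obtain ⟨hmono, hanti⟩ := ih a q (by omega)
          exact (hbetween a q (hanti.trans hmono)).2
  exact ⟨fun q => monotone_nat_of_le_succ fun a => (key _ a q rfl).1,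
    fun a => antitone_nat_of_succ_le fun q => (key _ a q rfl).2⟩

def extendPath (n : ℕ) (σ : Fin n → Bool) : ℕ → Bool :=
  fun i => if h : i < n then σ ⟨i, h⟩ else false

theorem card_filter_extendPath (n : ℕ) (σ : Fin n → Bool) (b : Bool) :
    #{i ∈ range n | extendPath n σ i = b} = #{i | σ i = b} := by
  rw [card_filter, card_filter, ← Fin.sum_univ_eq_sum_range]
  refine sum_congr rfl fun i _ => ?_
  rw [extendPath, dif_pos i.isLt]

theorem extendPath_snoc {s : ℕ} (τ : Fin s → Bool) (b : Bool) {i : ℕ} (hi : i < s) :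
    extendPath (s + 1) (Fin.snoc τ b) i = extendPath s τ i := by
  rw [extendPath, extendPath, dif_pos (by omega), dif_pos hi]
  exact Fin.snoc_castSucc (α := fun _ => Bool) b τ ⟨i, hi⟩

theorem pathVertex_congr (u : ℤ × ℤ) {σ τ : ℕ → Bool} {j : ℕ} (h : ∀ i < j, σ i = τ i) :
    pathVertex u σ j = pathVertex u τ j := by
  have hfilter : ∀ b, {i ∈ range j | σ i = b} = {i ∈ range j | τ i = b} := fun b =>
    filter_congr fun i hi => by rw [h i (mem_range.mp hi)]
  rw [pathVertex, pathVertex, hfilter, hfilter]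

theorem pathVertex_extendPath_self (u : ℤ × ℤ) (n : ℕ) (σ : Fin n → Bool) :
    pathVertex u (extendPath n σ) n = (u.1 + #{i | σ i = true}, u.2 + #{i | σ i = false}) := by
  rw [pathVertex, card_filter_extendPath, card_filter_extendPath]

theorem card_filter_false_eq_sub (n : ℕ) (σ : Fin n → Bool) :
    #{i | σ i = false} = n - #{i | σ i = true} := by
  have := card_filter_add_card_filter_not (s := (univ : Finset (Fin n))) (fun i => σ i = true)
  simp only [Bool.not_eq_true, card_univ, Fintype.card_fin] at this
  omega

theorem card_filter_snoc {s : ℕ} (τ : Fin s → Bool) (b : Bool) :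
    #{i | (Fin.snoc τ b : Fin (s + 1) → Bool) i = true} = #{i | τ i = true} + b.toNat := by
  rw [card_filter, card_filter, Fin.sum_univ_castSucc]
  simp only [Fin.snoc_castSucc, Fin.snoc_last]
  cases b <;> rfl

theorem forall_lt_snoc_iff {s k : ℕ} (hk : k ≤ s) (τ : Fin s → Bool) (b : Bool) :
    (∀ i : Fin (s + 1), (i : ℕ) < k → (Fin.snoc τ b : Fin (s + 1) → Bool) i = true) ↔
      ∀ i : Fin s, (i : ℕ) < k → τ i = true := by
  simp only [Fin.forall_fin_succ', Fin.val_castSucc, Fin.snoc_castSucc, Fin.val_last]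
  exact ⟨fun h => h.1, fun h => ⟨h, fun hs => absurd hs (by omega)⟩⟩

noncomputable def pathWeight (Y : ℤ × ℤ → ℝ) (n : ℕ) (σ : Fin n → Bool) : ℝ :=
  ∏ j ∈ range (n + 1), Y (pathVertex 0 (extendPath n σ) j)

theorem pathWeight_snoc (Y : ℤ × ℤ → ℝ) {s : ℕ} (τ : Fin s → Bool) (b : Bool) :
    pathWeight Y (s + 1) (Fin.snoc τ b) =
      pathWeight Y s τ * Y (pathVertex 0 (extendPath (s + 1) (Fin.snoc τ b)) (s + 1)) := by
  rw [pathWeight, prod_range_succ, pathWeight]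
  congr 1
  refine prod_congr rfl fun j hj => congrArg Y (pathVertex_congr 0 fun i hi => ?_)
  exact extendPath_snoc τ b (by have := mem_range.mp hj; omega)

/-- `exitPartition Y k n p` is `Z_{0,(p, n - p)}(τ ≥ k)`; for `k = 0` it is `Z_{0,(p, n - p)}`. -/
noncomputable def exitPartition (Y : ℤ × ℤ → ℝ) (k n p : ℕ) : ℝ :=
  ∑ σ : Fin n → Bool,
    if #{i | σ i = true} = p ∧ ∀ i : Fin n, (i : ℕ) < k → σ i = true then pathWeight Y n σ
    else 0

section ExitPartition

variable {Y : ℤ × ℤ → ℝ} {k n p : ℕ}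

theorem exitPartition_nonneg (hY : ∀ z, 0 ≤ Y z) : 0 ≤ exitPartition Y k n p :=
  sum_nonneg fun _ _ => ite_nonneg (prod_nonneg fun _ _ => hY _) le_rfl

theorem exitPartition_zero_pos (hY : ∀ z, 0 < Y z) (hp : p ≤ n) : 0 < exitPartition Y 0 n p := by
  refine sum_pos' (fun _ _ => ite_nonneg (prod_nonneg fun _ _ => (hY _).le) le_rfl)
    ⟨fun i => decide ((i : ℕ) < p), mem_univ _, ?_⟩
  rw [if_pos ⟨by simpa [Fin.card_filter_val_lt] using hp, fun i hi => absurd hi i.val.not_lt_zero⟩]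
  exact prod_pos fun _ _ => hY _

theorem exitPartition_eq_zero (hk : p < k) (hn : p < n) : exitPartition Y k n p = 0 := by
  refine sum_eq_zero fun σ _ => if_neg fun ⟨hcard, hfirst⟩ => ?_
  have : #{i : Fin n | (i : ℕ) < p + 1} ≤ #{i | σ i = true} :=
    card_le_card fun i hi => by
      simp only [mem_filter, mem_univ, true_and] at hi ⊢
      exact hfirst i (by omega)
  rw [Fin.card_filter_val_lt, hcard] at this
  omega

theorem exitPartition_self (k n : ℕ) : exitPartition Y k n n = exitPartition Y 0 n n := by
  refine sum_congr rfl fun σ _ => if_congr ?_ rfl rfl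
  refine ⟨fun h => ⟨h.1, fun i hi => absurd hi i.val.not_lt_zero⟩, fun h => ⟨h.1, fun i _ => ?_⟩⟩
  have huniv : ({i | σ i = true} : Finset (Fin n)) = univ := by
    rw [← card_eq_iff_eq_univ, Fintype.card_fin, h.1]
  exact filter_eq_self.mp huniv i (mem_univ i)

theorem exitPartition_succ_succ {s : ℕ} (hk : k ≤ s) (p : ℕ) :
    exitPartition Y k (s + 1) (p + 1) =
      Y ((p + 1 : ℕ), (s - p : ℕ)) * (exitPartition Y k s p + exitPartition Y k s (p + 1)) := by
  have hterm : ∀ (τ : Fin s → Bool) (b : Bool),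
      (if #{i | (Fin.snoc τ b : Fin (s + 1) → Bool) i = true} = p + 1 ∧
          ∀ i : Fin (s + 1), (i : ℕ) < k → (Fin.snoc τ b : Fin (s + 1) → Bool) i = true
        then pathWeight Y (s + 1) (Fin.snoc τ b) else 0) =
      Y ((p + 1 : ℕ), (s - p : ℕ)) *
        (if #{i | τ i = true} = p + 1 - b.toNat ∧ ∀ i : Fin s, (i : ℕ) < k → τ i = true
          then pathWeight Y s τ else 0) := by
    intro τ b
    have hcard : #{i | (Fin.snoc τ b : Fin (s + 1) → Bool) i = true} = p + 1 ↔
        #{i | τ i = true} = p + 1 - b.toNat := by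
      rw [card_filter_snoc]
      cases b <;> simp
    by_cases h : #{i | τ i = true} = p + 1 - b.toNat ∧ ∀ i : Fin s, (i : ℕ) < k → τ i = true
    · have hsnoc := hcard.2 h.1
      rw [if_pos ⟨hsnoc, (forall_lt_snoc_iff hk τ b).2 h.2⟩, if_pos h, pathWeight_snoc,
        pathVertex_extendPath_self, card_filter_false_eq_sub, hsnoc, mul_comm]
      simp
    · rw [if_neg fun h' => h ⟨hcard.1 h'.1, (forall_lt_snoc_iff hk τ b).1 h'.2⟩, if_neg h,
        mul_zero]
  rw [exitPartition, ← (Fin.snocEquiv fun _ => Bool).sum_comp, Fintype.sum_prod_type,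
    Fintype.sum_bool]
  calc _ = ∑ τ : Fin s → Bool, Y ((p + 1 : ℕ), (s - p : ℕ)) *
          (if #{i | τ i = true} = p ∧ ∀ i : Fin s, (i : ℕ) < k → τ i = true
            then pathWeight Y s τ else 0) +
        ∑ τ : Fin s → Bool, Y ((p + 1 : ℕ), (s - p : ℕ)) *
          (if #{i | τ i = true} = p + 1 ∧ ∀ i : Fin s, (i : ℕ) < k → τ i = true
            then pathWeight Y s τ else 0) := by
        congr 1 <;> exact sum_congr rfl fun τ _ => hterm τ _
    _ = _ := by rw [← mul_sum, ← mul_sum, ← mul_add, exitPartition, exitPartition]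

end ExitPartition

noncomputable def exitRatio (Y : ℤ × ℤ → ℝ) (k a q : ℕ) : ℝ :=
  exitPartition Y k (a + q) a / exitPartition Y 0 (a + q) a

section ExitRatio

variable {Y : ℤ × ℤ → ℝ} {k : ℕ}

theorem exitRatio_nonneg (hY : ∀ z, 0 ≤ Y z) (a q : ℕ) : 0 ≤ exitRatio Y k a q :=
  div_nonneg (exitPartition_nonneg hY) (exitPartition_nonneg hY)

theorem exitRatio_zero (hY : ∀ z, 0 < Y z) (a q : ℕ) : exitRatio Y 0 a q = 1 :=
  div_self (exitPartition_zero_pos hY (Nat.le_add_right a q)).ne'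

theorem exitRatio_row_zero (hY : ∀ z, 0 < Y z) (a : ℕ) : exitRatio Y k a 0 = 1 := by
  rw [exitRatio, add_zero, exitPartition_self, div_self (exitPartition_zero_pos hY le_rfl).ne']

theorem exitRatio_column_zero_succ (hk : 0 < k) (q : ℕ) : exitRatio Y k 0 (q + 1) = 0 := by
  rw [exitRatio, exitPartition_eq_zero hk (by omega), zero_div]

theorem exitRatio_between (hY : ∀ z, 0 < Y z) (a q : ℕ)
    (h : exitRatio Y k a (q + 1) ≤ exitRatio Y k (a + 1) q) :
    exitRatio Y k a (q + 1) ≤ exitRatio Y k (a + 1) (q + 1) ∧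
      exitRatio Y k (a + 1) (q + 1) ≤ exitRatio Y k (a + 1) q := by
  rcases lt_or_ge (a + q + 1) k with hs | hs
  · have hzero : ∀ a' q', a' + q' ≤ k → 0 < q' → exitRatio Y k a' q' = 0 := fun a' q' hle hpos => by
      rw [exitRatio, exitPartition_eq_zero (by omega) (by omega), zero_div]
    rw [hzero a (q + 1) (by omega) (by omega), hzero (a + 1) (q + 1) (by omega) (by omega)]
    exact ⟨le_rfl, exitRatio_nonneg (fun z => (hY z).le) _ _⟩
  · have hpos : ∀ b ≤ a + q + 1, 0 < exitPartition Y 0 (a + q + 1) b := fun b hb =>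
      exitPartition_zero_pos hY hb
    have hmediant : exitRatio Y k (a + 1) (q + 1) =
        (exitPartition Y k (a + q + 1) a + exitPartition Y k (a + q + 1) (a + 1)) /
          (exitPartition Y 0 (a + q + 1) a + exitPartition Y 0 (a + q + 1) (a + 1)) := by
      rw [exitRatio, show a + 1 + (q + 1) = a + q + 1 + 1 by omega, exitPartition_succ_succ hs,
        exitPartition_succ_succ (Nat.zero_le _), mul_div_mul_left _ _ (hY _).ne']
    have hleft : exitRatio Y k a (q + 1) =
        exitPartition Y k (a + q + 1) a / exitPartition Y 0 (a + q + 1) a := by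
      rw [exitRatio, ← add_assoc]
    have hright : exitRatio Y k (a + 1) q =
        exitPartition Y k (a + q + 1) (a + 1) / exitPartition Y 0 (a + q + 1) (a + 1) := by
      rw [exitRatio, add_right_comm]
    rw [hleft, hright] at h ⊢
    rw [hmediant]
    exact ⟨div_le_add_div_add (hpos a (by omega)) (hpos (a + 1) (by omega)) h,
      add_div_add_le_div (hpos a (by omega)) (hpos (a + 1) (by omega)) h⟩

theorem exitRatio_monotone_antitone (hY : ∀ z, 0 < Y z) :
    (∀ q, Monotone fun a => exitRatio Y k a q) ∧ ∀ a, Antitone (exitRatio Y k a) := by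
  refine monotone_antitone_of_between _ (fun a => ?_) (fun q => ?_) (exitRatio_between hY)
  · rw [exitRatio_row_zero hY, exitRatio_row_zero hY]
  · rcases Nat.eq_zero_or_pos k with rfl | hk
    · rw [exitRatio_zero hY, exitRatio_zero hY]
    · rw [exitRatio_column_zero_succ hk]
      exact exitRatio_nonneg (fun z => (hY z).le) _ _

end ExitRatio

theorem QExit_natCast (Y : ℤ × ℤ → ℝ) (k a q : ℕ) :
    QExit Y ((a : ℤ), (q : ℤ)) k = exitRatio Y k a q := by
  simp only [QExit, ZExit, Zfun, Prod.fst_zero, Prod.snd_zero, sub_zero, Nat.cast_nonneg, and_self,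
    ↓reduceIte, Int.toNat_natCast, exitRatio, exitPartition, pathWeight, not_lt_zero,
    IsEmpty.forall_iff, implies_true, and_true]
  rfl

theorem stmt6_general (Y : ℤ × ℤ → ℝ) (hY : ∀ z, 0 < Y z) (k l m : ℕ) (x : ℤ × ℤ)
    (hx1 : 0 ≤ x.1) (hx2' : 0 ≤ x.2 - m) :
    QExit Y x k ≤ QExit Y (x + ((l : ℤ), -(m : ℤ))) k := by
  obtain ⟨p, hp⟩ := Int.eq_ofNat_of_zero_le hx1
  obtain ⟨q, hq⟩ := Int.eq_ofNat_of_zero_le hx2'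
  have hx : x = ((p : ℤ), ((q + m : ℕ) : ℤ)) := by ext <;> push_cast <;> omega
  have hx' : x + ((l : ℤ), -(m : ℤ)) = (((p + l : ℕ) : ℤ), (q : ℤ)) := by
    rw [hx, Prod.mk_add_mk, Nat.cast_add, Nat.cast_add, add_neg_cancel_right]
  obtain ⟨hmono, hanti⟩ := exitRatio_monotone_antitone (k := k) hY
  rw [hx', hx, QExit_natCast, QExit_natCast]
  calc exitRatio Y k p (q + m) ≤ exitRatio Y k (p + l) (q + m) := hmono _ (Nat.le_add_right p l)
    _ ≤ exitRatio Y k (p + l) q := hanti _ (Nat.le_add_right q m)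

/-- Shifting the endpoint to the right or down increases the probability that the
polymer takes at least `k` initial `e₁` steps. -/
theorem stmt6 (Y : ℤ × ℤ → ℝ) (hY : ∀ z, 0 < Y z) (k l m : ℕ) (x : ℤ × ℤ)
    (hx1 : 0 ≤ x.1) (hx2 : 0 ≤ x.2) (hx2' : 0 ≤ x.2 - m) :
    QExit Y x k ≤ QExit Y (x + ((l : ℤ), -(m : ℤ))) k :=
  stmt6_general Y hY k l m x hx1 hx2'
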